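/- The cyclic group C_m acts on Λ(m,p) by (generator s)·λ = (λ(i+1) − λ(2))_{i∈ℤ} (shift and renormalize). For λ ∈ Λ^(α)(m,p), the stabilizer of λ under this action is the unique subgroup of C_m of order α; in particular, the orbit of λ has exactly m/α elements, and consequently m/α divides |Λ^(α)(m,p)|. -/

import Mathlib

/-! The stabilizer of `λ` under the shift action is its group of quasi-periods, the `k` for which
`λ(· + k) - λ(·)` is constant. This subgroup of `ℤ` contains `m/α`; by Bézout it contains
`g = gcd(m/α, k)` for each of its elements `k`, and a quasi-period `g ∣ m/α` with increment `c`
puts `λ` in `Λ(m/α', p/α') = Λ(g, c)` for `α' = m/g`, so exactness forces `g = m/α`. Hence the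
stabilizer is `(m/α)ℤ`, every orbit in `Λ^(α)(m,p)` has `m/α` elements, and `Λ^(α)(m,p)` is the
disjoint union of these orbits. -/

/-- The set `Λ(m,p)`. -/
def Lambda (m p : ℕ) : Set (ℤ → ℤ) :=
  {l | l 1 = 0 ∧ (∀ i : ℤ, l i ≤ l (i + 1)) ∧ ∀ i : ℤ, l (i + (m : ℤ)) = l i + (p : ℤ)}

/-- `Λ^(α)(m,p)`. -/
def LambdaExact (m p α : ℕ) : Set (ℤ → ℤ) :=
  {l | l ∈ Lambda (m / α) (p / α) ∧
    ∀ α' : ℕ, α' ∣ m → α' ∣ p → α ∣ α' → α < α' → l ∉ Lambda (m / α') (p / α')}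

/-- The shift-and-renormalize map: `(k · λ)(i) = λ(i+k) − λ(k+1)`. -/
def lambdaShift (k : ℤ) (l : ℤ → ℤ) : ℤ → ℤ := fun i => l (i + k) - l (k + 1)

theorem AddAction.dvd_card_of_forall_card_orbit_eq {G X : Type*} [AddGroup G] [AddAction G X]
    {n : ℕ} (h : ∀ x : X, Nat.card (orbit G x) = n) : n ∣ Nat.card X := by
  cases finite_or_infinite X
  · have := Fintype.ofFinite (orbitRel.Quotient G X)
    rw [Nat.card_congr (selfEquivSigmaOrbits G X), Nat.card_sigma]
    exact Finset.dvd_sum fun ω _ => (h _).symm.dvd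
  · rw [Nat.card_eq_zero_of_infinite]
    exact dvd_zero n

def quasiPeriods (l : ℤ → ℤ) : AddSubgroup ℤ where
  carrier := {k | ∃ c, ∀ i, l (i + k) = l i + c}
  zero_mem' := ⟨0, by simp⟩
  add_mem' := by
    rintro a b ⟨c, hc⟩ ⟨e, he⟩
    exact ⟨c + e, fun i => by rw [← add_assoc, he, hc, add_assoc]⟩
  neg_mem' := by
    rintro a ⟨c, hc⟩
    refine ⟨-c, fun i => ?_⟩
    have := hc (i + -a)
    rw [neg_add_cancel_right] at this
    linarith

theorem apply_add_mul_of_forall_apply_add {l : ℤ → ℤ} {k c : ℤ} (h : ∀ i, l (i + k) = l i + c)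
    (n i : ℤ) : l (i + n * k) = l i + n * c := by
  simpa using AddConstMapClass.map_add_zsmul (⟨l, h⟩ : AddConstMap ℤ ℤ k c) i n

section

variable {m p α : ℕ}

theorem lambdaShift_lambdaShift (a b : ℤ) (l : ℤ → ℤ) :
    lambdaShift a (lambdaShift b l) = lambdaShift (a + b) l := by
  funext i
  simp only [lambdaShift, add_assoc, add_comm 1 b, sub_sub_sub_cancel_right]

theorem lambdaShift_zero {l : ℤ → ℤ} (h : l 1 = 0) : lambdaShift 0 l = l := by
  funext i
  simp [lambdaShift, h]

theorem lambdaShift_eq_self_iff {l : ℤ → ℤ} (h : l 1 = 0) {k : ℤ} :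
    lambdaShift k l = l ↔ k ∈ quasiPeriods l := by
  refine ⟨fun hk => ⟨l (k + 1), fun i => ?_⟩, fun ⟨c, hc⟩ => funext fun i => ?_⟩
  · rw [← congrFun hk i, lambdaShift, sub_add_cancel]
  · have hc1 := hc 1
    rw [h, zero_add, add_comm] at hc1
    simp [lambdaShift, hc, hc1]

theorem lambdaShift_mem_Lambda {l : ℤ → ℤ} (hl : l ∈ Lambda m p) (k : ℤ) :
    lambdaShift k l ∈ Lambda m p := by
  obtain ⟨-, hmono, hper⟩ := hl
  refine ⟨by simp [lambdaShift, add_comm], fun i => ?_, fun i => ?_⟩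
  · simpa [lambdaShift, add_right_comm i 1 k] using hmono (i + k)
  · simp only [lambdaShift, add_right_comm i (m : ℤ) k, hper]
    ring

theorem lambdaShift_mem_LambdaExact {l : ℤ → ℤ} (hl : l ∈ LambdaExact m p α)
    (k : ℤ) : lambdaShift k l ∈ LambdaExact m p α := by
  refine ⟨lambdaShift_mem_Lambda hl.1 k, fun α' hα'm hα'p hαα' hlt hmem => ?_⟩
  refine hl.2 α' hα'm hα'p hαα' hlt ?_
  simpa [lambdaShift_lambdaShift, lambdaShift_zero hl.1.1] using lambdaShift_mem_Lambda hmem (-k)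

instance (m p α : ℕ) : AddAction ℤ (LambdaExact m p α) where
  vadd k l := ⟨lambdaShift k l, lambdaShift_mem_LambdaExact l.2 k⟩
  zero_vadd l := Subtype.ext (lambdaShift_zero l.2.1.1)
  add_vadd a b l := Subtype.ext (lambdaShift_lambdaShift a b l).symm

@[simp]
theorem LambdaExact.coe_vadd (k : ℤ) (l : LambdaExact m p α) :
    ((k +ᵥ l : LambdaExact m p α) : ℤ → ℤ) = lambdaShift k l :=
  rfl

theorem eq_of_dvd_of_mem_quasiPeriods (hm : 0 < m) (hαm : α ∣ m) (hαp : α ∣ p)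
    {l : ℤ → ℤ} (hl : l ∈ LambdaExact m p α) {g : ℕ} (hgd : g ∣ m / α)
    (hg : (g : ℤ) ∈ quasiPeriods l) : g = m / α := by
  obtain ⟨e, he⟩ := hgd
  obtain ⟨c, hc⟩ := hg
  set α' := e * α with hα'_def
  have hm_eq : m = g * α' := by rw [hα'_def, ← mul_assoc, ← he, Nat.div_mul_cancel hαm]
  have hα'm : α' ∣ m := Dvd.intro_left g hm_eq.symm
  have hα' : 0 < α' := Nat.pos_of_dvd_of_pos hα'm hm
  have hp_eq : (p : ℤ) = α' * c := by
    have hdα : (α : ℤ) * ((m / α : ℕ) : ℤ) = m := by exact_mod_cast Nat.mul_div_cancel' hαm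
    have hqα : (α : ℤ) * ((p / α : ℕ) : ℤ) = p := by exact_mod_cast Nat.mul_div_cancel' hαp
    have hgα' : (α' : ℤ) * g = m := by rw [hm_eq]; push_cast; ring
    have h₁ := apply_add_mul_of_forall_apply_add hl.1.2.2 α 0
    have h₂ := apply_add_mul_of_forall_apply_add hc α' 0
    rw [hdα, hqα] at h₁
    rw [hgα'] at h₂
    linarith
  have hα'p : α' ∣ p := by exact_mod_cast Dvd.intro c hp_eq.symm
  have hmem : l ∈ Lambda (m / α') (p / α') := by
    have hmg : m / α' = g := by rw [hm_eq, Nat.mul_div_cancel _ hα']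
    have hpc : ((p / α' : ℕ) : ℤ) = c := by
      rw [Int.natCast_div, hp_eq, Int.mul_ediv_cancel_left _ (Int.natCast_ne_zero.mpr hα'.ne')]
    exact ⟨hl.1.1, hl.1.2.1, by rw [hmg, hpc]; exact hc⟩
  have hnlt : ¬ α < α' := fun hlt => hl.2 α' hα'm hα'p (dvd_mul_left α e) hlt hmem
  have he1 : e = 1 := by
    have := Nat.pos_of_mul_pos_right hα'
    nlinarith
  rw [he, he1, mul_one]

theorem quasiPeriods_eq_zmultiples (hm : 0 < m) (hαm : α ∣ m) (hαp : α ∣ p)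
    {l : ℤ → ℤ} (hl : l ∈ LambdaExact m p α) :
    quasiPeriods l = AddSubgroup.zmultiples ((m / α : ℕ) : ℤ) := by
  have hd : ((m / α : ℕ) : ℤ) ∈ quasiPeriods l := ⟨_, hl.1.2.2⟩
  refine le_antisymm (fun k hk => ?_) (AddSubgroup.zmultiples_le.mpr hd)
  have hmul {a : ℤ} (n : ℤ) (ha : a ∈ quasiPeriods l) : a * n ∈ quasiPeriods l := by
    simpa [mul_comm] using zsmul_mem ha n
  have hgcd : ((Int.gcd (m / α : ℕ) k : ℕ) : ℤ) ∈ quasiPeriods l := by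
    rw [Int.gcd_eq_gcd_ab]
    exact add_mem (hmul _ hd) (hmul _ hk)
  have hgcd_dvd : Int.gcd (m / α : ℕ) k ∣ m / α := by
    exact_mod_cast Int.gcd_dvd_left ((m / α : ℕ) : ℤ) k
  have hgcd_eq := eq_of_dvd_of_mem_quasiPeriods hm hαm hαp hl hgcd_dvd hgcd
  rw [Int.mem_zmultiples_iff, ← hgcd_eq]
  exact Int.gcd_dvd_right _ _

theorem LambdaExact.stabilizer_eq_zmultiples (hm : 0 < m) (hαm : α ∣ m) (hαp : α ∣ p)
    (l : LambdaExact m p α) :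
    AddAction.stabilizer ℤ l = AddSubgroup.zmultiples ((m / α : ℕ) : ℤ) := by
  ext k
  rw [AddAction.mem_stabilizer_iff, Subtype.ext_iff, ← quasiPeriods_eq_zmultiples hm hαm hαp l.2]
  exact lambdaShift_eq_self_iff l.2.1.1

theorem LambdaExact.card_orbit_eq (hm : 0 < m) (hαm : α ∣ m) (hαp : α ∣ p)
    (l : LambdaExact m p α) : Nat.card (AddAction.orbit ℤ l) = m / α := by
  rw [Nat.card_coe_set_eq, ← AddAction.index_stabilizer,
    LambdaExact.stabilizer_eq_zmultiples hm hαm hαp, Int.index_zmultiples, Int.natAbs_natCast]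

theorem LambdaExact.image_val_orbit (l : LambdaExact m p α) :
    Subtype.val '' AddAction.orbit ℤ l = {l' | ∃ k, lambdaShift k l = l'} := by
  ext l'
  simp [AddAction.mem_orbit_iff]

end

theorem lambdaShift_stabilizer_orbit_general (m p α : ℕ) (hm : 0 < m)
    (hαm : α ∣ m) (hαp : α ∣ p) :
    (∀ (k : ℤ) (l : ℤ → ℤ), l ∈ Lambda m p → lambdaShift k l ∈ Lambda m p) ∧
    (∀ l ∈ LambdaExact m p α,
      (∀ k : ℤ, lambdaShift k l = l ↔ ((m / α : ℕ) : ℤ) ∣ k) ∧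
      Nat.card {l' : ℤ → ℤ | ∃ k : ℤ, lambdaShift k l = l'} = m / α) ∧
    (m / α) ∣ Nat.card (LambdaExact m p α) := by
  refine ⟨fun k l hl => lambdaShift_mem_Lambda hl k, fun l hl => ⟨fun k => ?_, ?_⟩,
    AddAction.dvd_card_of_forall_card_orbit_eq (LambdaExact.card_orbit_eq hm hαm hαp)⟩
  · rw [lambdaShift_eq_self_iff hl.1.1, quasiPeriods_eq_zmultiples hm hαm hαp hl,
      Int.mem_zmultiples_iff]
  · rw [← LambdaExact.image_val_orbit ⟨l, hl⟩, Nat.card_image_of_injective Subtype.val_injective,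
      LambdaExact.card_orbit_eq hm hαm hαp]

/-- the cyclic group `C_m` acts on `Λ(m,p)` by shifting; the stabilizer of
`λ ∈ Λ^(α)(m,p)` is the subgroup of order `α` (i.e. shifts by multiples of `m/α`),
the orbit of `λ` has `m/α` elements, and `m/α` divides `|Λ^(α)(m,p)|`. -/
theorem lambdaShift_stabilizer_orbit (m p α : ℕ) (hm : 0 < m) (hp : 0 < p)
    (hαm : α ∣ m) (hαp : α ∣ p) :
    (∀ (k : ℤ) (l : ℤ → ℤ), l ∈ Lambda m p → lambdaShift k l ∈ Lambda m p) ∧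
    (∀ l ∈ LambdaExact m p α,
      (∀ k : ℤ, lambdaShift k l = l ↔ ((m / α : ℕ) : ℤ) ∣ k) ∧
      Nat.card {l' : ℤ → ℤ | ∃ k : ℤ, lambdaShift k l = l'} = m / α) ∧
    (m / α) ∣ Nat.card (LambdaExact m p α) :=
  lambdaShift_stabilizer_orbit_general m p α hm hαm hαp
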